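/- arXiv:2302.03520 — 2 statements merged into one kernel-verified Lean document; each statement's English description precedes it below -/
import Mathlib

section
/- There exists a sequence x : ℕ → Fin k such that the convex hull of the set of cluster points of (r^x(n))_{n≥1} equals the entire simplex Δ^k. In particular, each vertex e_i of Δ^k is a cluster point of r^x. -/
open Filter Finset Topology

def blockIdx (j : ℕ) : ℕ := Nat.find (⟨j, Nat.self_le_factorial j⟩ : ∃ s, j ≤ s.factorial)

lemma le_factorial_blockIdx (j : ℕ) : j ≤ (blockIdx j).factorial := Nat.find_spec (⟨j, Nat.self_le_factorial j⟩ : ∃ s, j ≤ s.factorial)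

lemma blockIdx_le {j s : ℕ} (h : j ≤ s.factorial) : blockIdx j ≤ s := Nat.find_min' _ h

lemma blockIdx_eq {j s : ℕ} (h1 : (s-1).factorial < j) (h2 : j ≤ s.factorial) :
    blockIdx j = s := by
  refine le_antisymm (blockIdx_le h2) ?_
  by_contra hlt
  push_neg at hlt
  have : blockIdx j ≤ s - 1 := by omega
  have := Nat.factorial_le this
  have := le_factorial_blockIdx j
  omega

def mySeq (k : ℕ) (hk : 0 < k) : ℕ → Fin k := fun j => ⟨blockIdx j % k, Nat.mod_lt _ hk⟩

lemma count_other (k : ℕ) (hk : 0 < k) (s : ℕ) (hs : 1 ≤ s) (c : Fin k)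
    (hc : (c : ℕ) ≠ s % k) :
    ((Finset.Icc 1 s.factorial).filter (fun j => mySeq k hk j = c)).card ≤ (s-1).factorial := by
  have hsub : (Finset.Icc 1 s.factorial).filter (fun j => mySeq k hk j = c)
      ⊆ Finset.Icc 1 (s-1).factorial := by
    intro j hj
    simp only [Finset.mem_filter, Finset.mem_Icc] at hj ⊢
    refine ⟨hj.1.1, ?_⟩
    by_contra hgt
    push_neg at hgt
    have hb : blockIdx j = s := blockIdx_eq hgt hj.1.2
    apply hc
    have := hj.2
    rw [mySeq] at this
    have h2 : blockIdx j % k = (c : ℕ) := congrArg Fin.val this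
    rw [hb] at h2
    omega
  calc _ ≤ (Finset.Icc 1 (s-1).factorial).card := Finset.card_le_card hsub
    _ = (s-1).factorial := by rw [Nat.card_Icc]; omega

lemma count_main (k : ℕ) (hk : 0 < k) (s : ℕ) (hs : 1 ≤ s) (c : Fin k)
    (hc : (c : ℕ) = s % k) :
    s.factorial ≤ ((Finset.Icc 1 s.factorial).filter (fun j => mySeq k hk j = c)).card
      + (s-1).factorial := by
  have hsub : Finset.Icc ((s-1).factorial + 1) s.factorial
      ⊆ (Finset.Icc 1 s.factorial).filter (fun j => mySeq k hk j = c) := by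
    intro j hj
    simp only [Finset.mem_Icc] at hj
    have hb : blockIdx j = s := blockIdx_eq (by omega) hj.2
    simp only [Finset.mem_filter, Finset.mem_Icc]
    refine ⟨⟨by omega, hj.2⟩, ?_⟩
    apply Fin.ext
    simp [mySeq, hb, hc]
  have := Finset.card_le_card hsub
  rw [Nat.card_Icc] at this
  have hle : (s-1).factorial ≤ s.factorial := Nat.factorial_le (by omega)
  omega

lemma count_le (k : ℕ) (hk : 0 < k) (n : ℕ) (c : Fin k) :
    ((Finset.Icc 1 n).filter (fun j => mySeq k hk j = c)).card ≤ n := by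
  calc _ ≤ (Finset.Icc 1 n).card := Finset.card_filter_le _ _
    _ = n := by rw [Nat.card_Icc]; omega

lemma sum_counts (k : ℕ) (x : ℕ → Fin k) (n : ℕ) :
    ∑ c : Fin k, ((Finset.Icc 1 n).filter (fun j => x j = c)).card = n := by
  rw [← Finset.card_eq_sum_card_fiberwise (f := x) (t := Finset.univ) (fun a _ => Finset.mem_univ _)]
  rw [Nat.card_Icc]; omega

noncomputable def relFreq {k : ℕ} (x : ℕ → Fin k) (n : ℕ) :
    EuclideanSpace ℝ (Fin k) :=
  WithLp.toLp 2 (fun i => (((Finset.Icc 1 n).filter (fun j => x j = i)).card : ℝ) / n)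

def simplexSet (k : ℕ) : Set (EuclideanSpace ℝ (Fin k)) :=
  {p | (∀ i, 0 ≤ p i) ∧ ∑ i, p i = 1}

lemma simplexSet_eq (k : ℕ) :
    simplexSet k = (EuclideanSpace.equiv (Fin k) ℝ) ⁻¹' stdSimplex ℝ (Fin k) := rfl

lemma isClosed_simplexSet (k : ℕ) : IsClosed (simplexSet k) := by
  rw [simplexSet_eq]
  exact (isClosed_stdSimplex ℝ (Fin k)).preimage (EuclideanSpace.equiv (Fin k) ℝ).continuous

lemma convex_simplexSet (k : ℕ) : Convex ℝ (simplexSet k) := by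
  rw [simplexSet_eq]
  exact (convex_stdSimplex ℝ (Fin k)).linear_preimage
    (EuclideanSpace.equiv (Fin k) ℝ).toLinearEquiv.toLinearMap

lemma sum_counts' (k : ℕ) (x : ℕ → Fin k) (n : ℕ) :
    ∑ c : Fin k, ((Finset.Icc 1 n).filter (fun j => x j = c)).card = n := by
  rw [← Finset.card_eq_sum_card_fiberwise (f := x) (t := Finset.univ) (fun a _ => Finset.mem_univ _)]
  rw [Nat.card_Icc]; omega

lemma relFreq_mem {k : ℕ} (x : ℕ → Fin k) (n : ℕ) (hn : 1 ≤ n) :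
    relFreq x n ∈ simplexSet k := by
  constructor
  · intro i
    rw [relFreq, PiLp.toLp_apply]
    exact div_nonneg (Nat.cast_nonneg _) (Nat.cast_nonneg _)
  · have h := sum_counts' k x n
    simp only [relFreq, PiLp.toLp_apply, ← Finset.sum_div]
    rw [← Nat.cast_sum, h]
    field_simp

lemma cluster_subset {k : ℕ} (x : ℕ → Fin k) :
    {p : EuclideanSpace ℝ (Fin k) | MapClusterPt p atTop (relFreq x)} ⊆ simplexSet k := by
  intro p hp
  have hle : map (relFreq x) atTop ≤ 𝓟 (simplexSet k) := by
    rw [le_principal_iff, Filter.mem_map]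
    filter_upwards [eventually_ge_atTop 1] with n hn
    exact relFreq_mem x n hn
  have : ClusterPt p (𝓟 (simplexSet k)) := hp.clusterPt.mono hle
  rw [← mem_closure_iff_clusterPt, (isClosed_simplexSet k).closure_eq] at this
  exact this

lemma single_eq {k : ℕ} (i : Fin k) :
    (EuclideanSpace.equiv (Fin k) ℝ).symm (Pi.single i 1) = EuclideanSpace.single i (1 : ℝ) := rfl

noncomputable def toEuc (k : ℕ) : (Fin k → ℝ) →ₗ[ℝ] EuclideanSpace ℝ (Fin k) :=
  ((EuclideanSpace.equiv (Fin k) ℝ).symm : (Fin k → ℝ) →L[ℝ] EuclideanSpace ℝ (Fin k)).toLinearMap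

lemma simplexSet_eq_hull (k : ℕ) :
    simplexSet k = convexHull ℝ (Set.range fun i : Fin k => EuclideanSpace.single i (1 : ℝ)) := by
  have hf : True := trivial
  have h1 : simplexSet k = (toEuc k) '' stdSimplex ℝ (Fin k) := by
    ext p
    constructor
    · intro h; exact ⟨fun i => p i, h, rfl⟩
    · rintro ⟨q, hq, rfl⟩; exact hq
  have key : (⇑(toEuc k) ∘ fun i (j : Fin k) => @ite ℝ (i = j) (instDecidableEqFin k i j) (1:ℝ) 0)
      = fun i : Fin k => EuclideanSpace.single i (1:ℝ) := by
    funext i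
    show (toEuc k) (fun j => @ite ℝ (i = j) (instDecidableEqFin k i j) (1:ℝ) 0)
      = EuclideanSpace.single i 1
    ext j
    show (@ite ℝ (i = j) (instDecidableEqFin k i j) (1:ℝ) 0) = EuclideanSpace.single i (1:ℝ) j
    rw [EuclideanSpace.single_apply]
    rcases eq_or_ne i j with h | h
    · simp [h]
    · simp [h, h.symm]
  rw [h1, ← convexHull_basis_eq_stdSimplex, LinearMap.image_convexHull (toEuc k),
    ← Set.range_comp]
  exact congrArg (convexHull ℝ) (congrArg Set.range key)

lemma factorial_eq (s : ℕ) (hs : 1 ≤ s) : s.factorial = s * (s-1).factorial := by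
  obtain ⟨t, rfl⟩ : ∃ t, s = t + 1 := ⟨s - 1, by omega⟩
  simp [Nat.factorial_succ]

lemma relFreq_le_one {k : ℕ} (x : ℕ → Fin k) (n : ℕ) (c : Fin k) :
    relFreq x n c ≤ 1 := by
  rcases Nat.eq_zero_or_pos n with h | h
  · simp [relFreq, h]
  · rw [relFreq, PiLp.toLp_apply, div_le_one (by positivity)]
    have : ((Finset.Icc 1 n).filter (fun j => x j = c)).card ≤ n := by
      calc _ ≤ (Finset.Icc 1 n).card := Finset.card_filter_le _ _
        _ = n := by rw [Nat.card_Icc]; omega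
    exact Nat.cast_le.mpr this

lemma relFreq_nonneg {k : ℕ} (x : ℕ → Fin k) (n : ℕ) (c : Fin k) :
    0 ≤ relFreq x n c := by
  rw [relFreq, PiLp.toLp_apply]; exact div_nonneg (Nat.cast_nonneg _) (Nat.cast_nonneg _)

lemma relFreq_main_ge (k : ℕ) (hk : 0 < k) (s : ℕ) (hs : 1 ≤ s) (c : Fin k)
    (hc : (c : ℕ) = s % k) :
    1 - 1/(s:ℝ) ≤ relFreq (mySeq k hk) s.factorial c := by
  have hmain := count_main k hk s hs c hc
  have hfac : (s.factorial : ℝ) = s * (s-1).factorial := by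
    exact_mod_cast congrArg (Nat.cast : ℕ → ℝ) (factorial_eq s hs)
  have hNpos : (0:ℝ) < s.factorial := by exact_mod_cast Nat.factorial_pos s
  have hspos : (0:ℝ) < s := by exact_mod_cast hs
  rw [relFreq, PiLp.toLp_apply, le_div_iff₀ hNpos]
  have h1 : (s.factorial : ℝ) ≤ (((Finset.Icc 1 s.factorial).filter
      (fun j => mySeq k hk j = c)).card : ℝ) + (s-1).factorial := by exact_mod_cast hmain
  have h2 : (1 - 1/(s:ℝ)) * s.factorial = s.factorial - (s-1).factorial := by
    rw [hfac]; field_simp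
  rw [h2]; linarith

lemma relFreq_other_le (k : ℕ) (hk : 0 < k) (s : ℕ) (hs : 1 ≤ s) (c : Fin k)
    (hc : (c : ℕ) ≠ s % k) :
    relFreq (mySeq k hk) s.factorial c ≤ 1/(s:ℝ) := by
  have hother := count_other k hk s hs c hc
  have hfac : (s.factorial : ℝ) = s * (s-1).factorial := by
    exact_mod_cast congrArg (Nat.cast : ℕ → ℝ) (factorial_eq s hs)
  have hNpos : (0:ℝ) < s.factorial := by exact_mod_cast Nat.factorial_pos s
  have hspos : (0:ℝ) < s := by exact_mod_cast hs
  have hfpos : (0:ℝ) < (s-1).factorial := by exact_mod_cast Nat.factorial_pos (s-1)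
  rw [relFreq, PiLp.toLp_apply, div_le_iff₀ hNpos]
  have h1 : (((Finset.Icc 1 s.factorial).filter (fun j => mySeq k hk j = c)).card : ℝ)
      ≤ (s-1).factorial := by exact_mod_cast hother
  have h2 : 1/(s:ℝ) * s.factorial = (s-1).factorial := by rw [hfac]; field_simp
  rw [h2]; exact h1

lemma vertex_cluster (k : ℕ) (hk : 0 < k) (i : Fin k) :
    MapClusterPt (EuclideanSpace.single i (1 : ℝ)) atTop (relFreq (mySeq k hk)) := by
  set s : ℕ → ℕ := fun m => (i : ℕ) + (m+1)*k with hsdef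
  have hs1 : ∀ m, 1 ≤ s m := fun m => by have := i.isLt; simp [hsdef]; nlinarith [hk]
  have hsm : ∀ m, m + 1 ≤ s m := fun m => by have := i.2; simp [hsdef]; nlinarith [hk]
  have hres : ∀ m, (i : ℕ) = s m % k := fun m => by
    simp [hsdef, Nat.add_mul_mod_self_right, Nat.mod_eq_of_lt i.isLt]
  set n : ℕ → ℕ := fun m => (s m).factorial with hndef
  have hn : Tendsto n atTop atTop := by
    apply tendsto_atTop_mono (fun m => ?_) tendsto_id
    calc (id m : ℕ) = m := rfl
      _ ≤ m + 1 := by omega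
      _ ≤ s m := hsm m
      _ ≤ (s m).factorial := Nat.self_le_factorial _
  apply MapClusterPt.of_comp (φ := n) hn
  apply Filter.Tendsto.mapClusterPt
  -- Tendsto (relFreq (mySeq k hk) ∘ n) atTop (𝓝 (EuclideanSpace.single i 1))
  have key : Tendsto (fun m c => relFreq (mySeq k hk) (n m) c) atTop
      (𝓝 (Pi.single i (1:ℝ))) := by
    rw [tendsto_pi_nhds]
    intro c
    rcases eq_or_ne c i with rfl | hc
    · have hlb : ∀ m : ℕ, 1 - 1/((m:ℝ)+1) ≤ relFreq (mySeq k hk) (n m) c := by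
        intro m
        have h1 := relFreq_main_ge k hk (s m) (hs1 m) c (hres m)
        have h2 : 1/((s m : ℝ)) ≤ 1/((m:ℝ)+1) := by
          apply one_div_le_one_div_of_le (by positivity)
          exact_mod_cast hsm m
        linarith
      have hub : ∀ m, relFreq (mySeq k hk) (n m) c ≤ 1 := fun m => relFreq_le_one _ _ _
      have hl : Tendsto (fun m : ℕ => 1 - 1/((m:ℝ)+1)) atTop (𝓝 1) := by
        have := tendsto_one_div_add_atTop_nhds_zero_nat (𝕜 := ℝ)
        have h := (tendsto_const_nhds (x := (1:ℝ)) (f := atTop)).sub this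
        simpa using h
      have := tendsto_of_tendsto_of_tendsto_of_le_of_le hl tendsto_const_nhds hlb hub
      simpa [Pi.single_apply] using this
    · have hub : ∀ m : ℕ, relFreq (mySeq k hk) (n m) c ≤ 1/((m:ℝ)+1) := by
        intro m
        have hcc : (c : ℕ) ≠ s m % k := by
          rw [← hres m]
          exact fun h => hc (Fin.ext h)
        have h1 := relFreq_other_le k hk (s m) (hs1 m) c hcc
        have h2 : 1/((s m : ℝ)) ≤ 1/((m:ℝ)+1) := by
          apply one_div_le_one_div_of_le (by positivity)
          exact_mod_cast hsm m
        linarith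
      have hlb : ∀ m, 0 ≤ relFreq (mySeq k hk) (n m) c := fun m => relFreq_nonneg _ _ _
      have hu : Tendsto (fun m : ℕ => 1/((m:ℝ)+1)) atTop (𝓝 0) :=
        tendsto_one_div_add_atTop_nhds_zero_nat
      have := tendsto_of_tendsto_of_tendsto_of_le_of_le tendsto_const_nhds hu hlb hub
      simpa [Pi.single_apply, hc] using this
  have := ((EuclideanSpace.equiv (Fin k) ℝ).symm.continuous.tendsto (Pi.single i (1:ℝ))).comp key
  exact this

theorem stmt15 (k : ℕ) (hk : 1 ≤ k) :
    ∃ x : ℕ → Fin k,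
      convexHull ℝ {p : EuclideanSpace ℝ (Fin k) | MapClusterPt p atTop (relFreq x)}
        = simplexSet k ∧
      ∀ i : Fin k,
        MapClusterPt (EuclideanSpace.single i (1 : ℝ)) atTop (relFreq x) := by
  refine ⟨mySeq k hk, ?_, fun i => vertex_cluster k hk i⟩
  apply Set.Subset.antisymm
  · exact convexHull_min (cluster_subset _) (convex_simplexSet k)
  · rw [simplexSet_eq_hull k]
    apply convexHull_mono
    rintro p ⟨i, rfl⟩
    exact vertex_cluster k hk i
end

section
/- Let φ : ℕ → ℕ be strictly increasing with lim_{s→∞} φ(s)/φ(s+1) = 0, and let x : ℕ → Fin k be the sequence where positions φ(s)+1, ..., φ(s+1) all carry the symbol (s mod k). Then for every s, ‖e_{s mod k} − r^x(φ(s+1))‖ ≤ 2·φ(s)/φ(s+1); consequently each vertex e_i is a cluster point of the sequence (r^x(n))_n. -/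
open Filter

theorem stmt16 (k : ℕ) (hk : 0 < k) (φ : ℕ → ℕ) (hmono : StrictMono φ)
    (hratio : Tendsto (fun s => (φ s : ℝ) / φ (s + 1)) atTop (nhds 0))
    (x : ℕ → Fin k)
    (hx : ∀ s j, φ s < j → j ≤ φ (s + 1) → x j = ⟨s % k, Nat.mod_lt s hk⟩) :
    (∀ s, ‖EuclideanSpace.single (⟨s % k, Nat.mod_lt s hk⟩ : Fin k) (1 : ℝ)
        - relFreq x (φ (s + 1))‖ ≤ 2 * (φ s : ℝ) / φ (s + 1)) ∧
    (∀ i : Fin k, MapClusterPt (EuclideanSpace.single i (1 : ℝ)) atTop (relFreq x)) := by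
  have key : ∀ s, ‖EuclideanSpace.single (⟨s % k, Nat.mod_lt s hk⟩ : Fin k) (1 : ℝ)
      - relFreq x (φ (s + 1))‖ ≤ 2 * (φ s : ℝ) / φ (s + 1) := by
    intro s
    set n := φ (s + 1) with hn
    set is : Fin k := ⟨s % k, Nat.mod_lt s hk⟩ with his
    have hφlt : φ s < n := hmono (Nat.lt_succ_self s)
    have hnpos : 0 < n := Nat.lt_of_le_of_lt (Nat.zero_le _) hφlt
    have hnR : (0:ℝ) < n := by exact_mod_cast hnpos
    set c : Fin k → ℕ := fun i => ((Finset.Icc 1 n).filter (fun j => x j = i)).card with hc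
    -- counts sum to n
    have hsum : ∑ i, c i = n := by
      have := Finset.card_eq_sum_card_fiberwise
        (f := x) (s := Finset.Icc 1 n) (t := Finset.univ) (fun a _ => Finset.mem_univ _)
      simp only [hc]
      rw [← this, Nat.card_Icc]
      omega
    have hle : ∀ i, c i ≤ n := by
      intro i
      have : c i ≤ (Finset.Icc 1 n).card := Finset.card_le_card (Finset.filter_subset _ _)
      simpa [Nat.card_Icc] using this
    have hsub : Finset.Ioc (φ s) n ⊆ (Finset.Icc 1 n).filter (fun j => x j = is) := by
      intro j hj
      simp only [Finset.mem_Ioc] at hj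
      simp only [Finset.mem_filter, Finset.mem_Icc]
      exact ⟨⟨by omega, hj.2⟩, hx s j hj.1 hj.2⟩
    have hlow : n - φ s ≤ c is := by
      have := Finset.card_le_card hsub
      simpa [Nat.card_Ioc] using this
    -- real side
    have hr_eq : ∀ i, relFreq x n i = (c i : ℝ) / n := fun i => rfl
    have hr_nonneg : ∀ i, 0 ≤ relFreq x n i := fun i => by
      rw [hr_eq]; positivity
    have hr_le_one : relFreq x n is ≤ 1 := by
      rw [hr_eq]
      exact div_le_one_of_le₀ (Nat.cast_le.mpr (hle is)) hnR.le
    have hsumr : ∑ i, relFreq x n i = 1 := by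
      simp only [hr_eq]
      rw [← Finset.sum_div, ← Nat.cast_sum, hsum, div_self hnR.ne']
    have ha : 1 - relFreq x n is ≤ (φ s : ℝ) / n := by
      rw [hr_eq]
      have h1 : (1:ℝ) - (c is : ℝ) / n = ((n:ℝ) - c is) / n := by field_simp
      rw [h1]
      have hnum : (n:ℝ) - (c is : ℝ) ≤ (φ s : ℝ) := by
        have h2 : n ≤ φ s + c is := by omega
        have h3 : (n:ℝ) ≤ (φ s : ℝ) + (c is : ℝ) := by exact_mod_cast h2
        linarith
      gcongr
    -- the vector
    set v : EuclideanSpace ℝ (Fin k) := EuclideanSpace.single is (1:ℝ) - relFreq x n with hv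
    have hvi : ∀ i, v i = (if i = is then (1:ℝ) else 0) - relFreq x n i := by
      intro i
      simp [hv, EuclideanSpace.single_apply]
    have hl1 : ∑ i, |v i| = 2 * (1 - relFreq x n is) := by
      rw [← Finset.add_sum_erase _ _ (Finset.mem_univ is)]
      have h1 : |v is| = 1 - relFreq x n is := by
        have hvis : v is = 1 - relFreq x n is := by rw [hvi]; simp
        rw [hvis, abs_of_nonneg (by linarith)]
      have h2 : ∀ i ∈ Finset.univ.erase is, |v i| = relFreq x n i := by
        intro i hi
        have hne : i ≠ is := Finset.ne_of_mem_erase hi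
        rw [hvi, if_neg hne, zero_sub, abs_neg, abs_of_nonneg (hr_nonneg i)]
      rw [Finset.sum_congr rfl h2, h1]
      have h3 : ∑ i ∈ Finset.univ.erase is, relFreq x n i = 1 - relFreq x n is := by
        have := Finset.add_sum_erase Finset.univ (relFreq x n) (Finset.mem_univ is)
        rw [hsumr] at this
        linarith
      rw [h3]; ring
    have hnorm : ‖v‖ ≤ ∑ i, |v i| := by
      rw [EuclideanSpace.norm_eq]
      have h1 : ∑ i, ‖v i‖ ^ 2 ≤ (∑ i, |v i|) ^ 2 := by
        simpa [Real.norm_eq_abs] using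
          Finset.sum_sq_le_sq_sum_of_nonneg (s := Finset.univ)
            (f := fun i => |v i|) (fun i _ => abs_nonneg _)
      calc Real.sqrt (∑ i, ‖v i‖ ^ 2) ≤ Real.sqrt ((∑ i, |v i|) ^ 2) :=
            Real.sqrt_le_sqrt h1
        _ = ∑ i, |v i| := Real.sqrt_sq (Finset.sum_nonneg fun i _ => abs_nonneg _)
    calc ‖v‖ ≤ ∑ i, |v i| := hnorm
      _ = 2 * (1 - relFreq x n is) := hl1
      _ ≤ 2 * ((φ s : ℝ) / n) := by linarith
      _ = 2 * (φ s : ℝ) / n := by ring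
  refine ⟨key, fun i => ?_⟩
  set g : ℕ → ℕ := fun m => m * k + i.val with hg
  have hgtop : Tendsto g atTop atTop := by
    apply tendsto_atTop_mono (fun m => ?_) tendsto_id
    calc (id m : ℕ) = m := rfl
      _ ≤ m * k := Nat.le_mul_of_pos_right m hk
      _ ≤ m * k + i.val := Nat.le_add_right _ _
  have hmod : ∀ m : ℕ, (⟨g m % k, Nat.mod_lt (g m) hk⟩ : Fin k) = i := by
    intro m
    ext
    simp only [hg]
    simp [Nat.add_mod, Nat.mul_mod_left, Nat.mod_eq_of_lt i.isLt]
  set u : ℕ → ℕ := fun m => φ (g m + 1) with hu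
  have hutop : Tendsto u atTop atTop :=
    hmono.tendsto_atTop.comp (tendsto_atTop_mono (fun m => Nat.le_succ (g m)) hgtop)
  have hbound : ∀ m, ‖relFreq x (u m) - EuclideanSpace.single i (1:ℝ)‖
      ≤ 2 * (φ (g m) : ℝ) / φ (g m + 1) := by
    intro m
    rw [norm_sub_rev]
    have := key (g m)
    rwa [hmod m] at this
  have htend0 : Tendsto (fun m => 2 * (φ (g m) : ℝ) / φ (g m + 1)) atTop (nhds 0) := by
    have h1 : Tendsto (fun m => (φ (g m) : ℝ) / φ (g m + 1)) atTop (nhds 0) :=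
      hratio.comp hgtop
    have := h1.const_mul (2:ℝ)
    simpa [mul_div_assoc] using this
  have htend : Tendsto (fun m => relFreq x (u m)) atTop
      (nhds (EuclideanSpace.single i (1:ℝ))) := by
    have h0 : Tendsto (fun m => relFreq x (u m) - EuclideanSpace.single i (1:ℝ))
        atTop (nhds 0) := squeeze_zero_norm hbound htend0
    exact tendsto_sub_nhds_zero_iff.mp h0
  have hcp : MapClusterPt (EuclideanSpace.single i (1:ℝ)) atTop (relFreq x ∘ u) :=
    htend.mapClusterPt
  exact MapClusterPt.of_comp hutop hcp
end
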